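/- arXiv:2212.03949 — 5 statements merged into one kernel-verified Lean document; each statement's English description precedes it below -/
import Mathlib

section
/- Let Γ be a generalized recursive atom ordering of a finite bounded poset P. Then for any linear extension of P used in the atom reordering process, the reordering of Γ is a recursive atom ordering of P. -/
/-- `l` is a saturated chain from `x` to `y` in the poset `α`:
a list `x = x₀ ⋖ x₁ ⋖ ⋯ ⋖ x_k = y` of elements, each covered by the next. -/
def SatChain {α : Type*} [PartialOrder α] (x y : α) (l : List α) : Prop :=
  l.Chain' (· ⋖ ·) ∧ l.head? = some x ∧ l.getLast? = some y

/-- A chain-atom ordering of a bounded poset `α`: for each `u : α` and each root `r`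
(a saturated chain from `⊥` to `u`, recorded as a list ending in `u`), a strict linear
order on the atoms of the rooted interval `[u, ⊤]_r`, i.e. on the elements covering `u`.
The relation is recorded for all pairs `(u, r)`; only genuine roots are relevant. -/
structure ChainAtomOrdering (α : Type*) [PartialOrder α] where
  lt : α → List α → α → α → Prop
  irrefl : ∀ u r a, ¬ lt u r a a
  trans : ∀ u r a b c, lt u r a b → lt u r b c → lt u r a c
  total : ∀ u r a b, u ⋖ a → u ⋖ b → a ≠ b → lt u r a b ∨ lt u r b a

/-- `a` is the first atom of the rooted interval `[u,v]_r` in the chain-atom ordering `S`. -/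
def ChainAtomOrdering.IsFirstAtom {α : Type*} [PartialOrder α] (S : ChainAtomOrdering α)
    (u v : α) (r : List α) (a : α) : Prop :=
  u ⋖ a ∧ a ≤ v ∧ ∀ b, u ⋖ b → b ≤ v → b ≠ a → S.lt u r a b

/-- `IsGRAO S u v r`: the restriction of the chain-atom ordering `S` to the rooted
interval `[u,v]_r` is a generalized recursive atom ordering (GRAO) of `[u,v]`.
Either `[u,v]` has length 1, or: (i)(a) for each atom `a` of `[u,v]_r` the restriction
to `[a,v]_{r·a}` is a GRAO; (i)(b) for each atom `a` and each `a ⋖ x ⋖ w ≤ v`, either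
the first atom of `[a,w]_{r·a}` lies above some atom of `[u,v]_r` earlier than `a`, or
no atom of `[a,w]_{r·a}` does; (ii) if atoms `ai, aj` of `[u,v]_r` with `ai` earlier
than `aj` lie below a common `y ≤ v`, then some `z` with `aj ⋖ z ≤ y` lies above an
atom of `[u,v]_r` earlier than `aj`. -/
inductive IsGRAO {α : Type*} [PartialOrder α] (S : ChainAtomOrdering α) :
    α → α → List α → Prop
  | base (u v : α) (r : List α) (h : u ⋖ v) : IsGRAO S u v r
  | step (u v : α) (r : List α)
      (ia : ∀ a, u ⋖ a → a ≤ v → IsGRAO S a v (r ++ [a]))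
      (ib : ∀ a x w, u ⋖ a → a ≤ v → a ⋖ x → x ⋖ w → w ≤ v →
        (∃ b, S.IsFirstAtom a w (r ++ [a]) b ∧
          ∃ a', u ⋖ a' ∧ a' ≤ v ∧ S.lt u r a' a ∧ a' < b) ∨
        (∀ b a', a ⋖ b → b ≤ w → u ⋖ a' → a' ≤ v → S.lt u r a' a → ¬ a' < b))
      (ii : ∀ ai aj y, u ⋖ ai → ai ≤ v → u ⋖ aj → aj ≤ v → S.lt u r ai aj →
        ai < y → aj < y → y ≤ v →
        ∃ ak z, u ⋖ ak ∧ ak ≤ v ∧ S.lt u r ak aj ∧ aj ⋖ z ∧ z ≤ y ∧ ak < z) :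
      IsGRAO S u v r

/-- `IsRAO S u v r`: the restriction of the chain-atom ordering `S` to the rooted
interval `[u,v]_r` is a recursive atom ordering (RAO) of `[u,v]`.  It differs from a
GRAO only in condition (i)(b): for each atom `a` of `[u,v]_r`, every atom of
`[a,v]_{r·a}` lying above some atom of `[u,v]_r` earlier than `a` must precede every
atom of `[a,v]_{r·a}` lying above no such atom. -/
inductive IsRAO {α : Type*} [PartialOrder α] (S : ChainAtomOrdering α) :
    α → α → List α → Prop
  | base (u v : α) (r : List α) (h : u ⋖ v) : IsRAO S u v r
  | step (u v : α) (r : List α)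
      (ia : ∀ a, u ⋖ a → a ≤ v → IsRAO S a v (r ++ [a]))
      (ib : ∀ a b c, u ⋖ a → a ≤ v → a ⋖ b → b ≤ v → a ⋖ c → c ≤ v →
        (∃ a', u ⋖ a' ∧ a' ≤ v ∧ S.lt u r a' a ∧ a' < b) →
        (∀ a', u ⋖ a' → a' ≤ v → S.lt u r a' a → ¬ a' < c) →
        S.lt a (r ++ [a]) b c)
      (ii : ∀ ai aj y, u ⋖ ai → ai ≤ v → u ⋖ aj → aj ≤ v → S.lt u r ai aj →
        ai < y → aj < y → y ≤ v →
        ∃ ak z, u ⋖ ak ∧ ak ≤ v ∧ S.lt u r ak aj ∧ aj ⋖ z ∧ z ≤ y ∧ ak < z) :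
      IsRAO S u v r

/-- `MemF S uminus rminus u v a`: the atom `a` of the rooted interval `[u,v]_{rminus·u}`
belongs to the set `F_r(u,v)`: `a` lies above some atom `u'` of `[uminus,v]_{rminus}`
that comes earlier than `u` in the `S`-order on the atoms of `[uminus,⊤]_{rminus}`. -/
def MemF {α : Type*} [PartialOrder α] (S : ChainAtomOrdering α)
    (uminus : α) (rminus : List α) (u v a : α) : Prop :=
  u ⋖ a ∧ a ≤ v ∧ ∃ u', uminus ⋖ u' ∧ u' ≤ v ∧ S.lt uminus rminus u' u ∧ u' < a

/-- `MemG S uminus rminus u v a`: the atom `a` of `[u,v]_{rminus·u}` belongs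
to `G_r(u,v)`, the complement of `F_r(u,v)` among the atoms of `[u,v]`. -/
def MemG {α : Type*} [PartialOrder α] (S : ChainAtomOrdering α)
    (uminus : α) (rminus : List α) (u v a : α) : Prop :=
  u ⋖ a ∧ a ≤ v ∧ ¬ MemF S uminus rminus u v a

/-- `IsReorderingOn v Ω Γ`: the chain-atom ordering `Γ` (restricted to the interval
`[⊥,v]`) is the result of applying the atom reordering process to the restriction of
`Ω` to `[⊥,v]`.  This is the declarative characterization of the bottom-to-top
reordering procedure (for any linear extension): the order on the atoms of `[⊥,v]`
is unchanged, and for each `u ≠ ⊥` with root `rminus·u`, the elements of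
`F_r(u,v)` (computed with respect to the already-reordered orders strictly below `u`,
i.e. with respect to `Γ`) precede those of `G_r(u,v)`, and the relative `Ω`-order
within `F_r(u,v)` and within `G_r(u,v)` is preserved. -/
def IsReorderingOn {α : Type*} [PartialOrder α] [OrderBot α] (v : α)
    (Om Ga : ChainAtomOrdering α) : Prop :=
  (∀ a b, (⊥ : α) ⋖ a → a ≤ v → (⊥ : α) ⋖ b → b ≤ v →
    (Ga.lt ⊥ [⊥] a b ↔ Om.lt ⊥ [⊥] a b)) ∧
  (∀ (rminus : List α) (uminus u : α), SatChain (⊥ : α) uminus rminus → uminus ⋖ u →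
    ∀ a b, u ⋖ a → a ≤ v → u ⋖ b → b ≤ v →
      (Ga.lt u (rminus ++ [u]) a b ↔
        (MemF Ga uminus rminus u v a ∧ ¬ MemF Ga uminus rminus u v b) ∨
        ((MemF Ga uminus rminus u v a ↔ MemF Ga uminus rminus u v b) ∧
          Om.lt u (rminus ++ [u]) a b)))

/-- `Γ` is the result of applying the atom reordering process to `Ω` on all of `α`. -/
def IsReordering {α : Type*} [PartialOrder α] [BoundedOrder α]
    (Om Ga : ChainAtomOrdering α) : Prop :=
  IsReorderingOn (⊤ : α) Om Ga

/-!
Let `T` be the reordering of the GRAO `S`. At every rooted element `(u, r)` the `T`-order on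
the atoms of `u` is a stable partition of the `S`-order: the atoms of a set `F` come first
(`F = ∅` at the root `⊥`, and `F = F_r(u)` otherwise). The invariant carried along roots is
that `F` is closed under `S`-first atoms: if `[u, w]` contains an atom of `F`, then so does its
`S`-first atom. Closure at `u` makes the set `F_{r·a}(a)` computed with `T` coincide with the
one computed with `S`, and conditions (i)(b) and (ii) of the GRAO show that this set is closed
at `a`. Given closure, condition (ii) for `T` follows from (ii) for `S` by replacing the witness
atom with the `S`-first atom of `[u, z]`, while (i)(b) of an RAO is what the reordering enforces.
-/

lemma CovBy.lt_of_le_of_covBy_of_ne {α : Type*} [PartialOrder α] {a p q w : α}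
    (hp : a ⋖ p) (hpw : p ≤ w) (hq : a ⋖ q) (hqw : q ≤ w) (hne : p ≠ q) : p < w :=
  hpw.lt_of_ne fun h => hne (by subst h; exact (hqw.eq_or_lt.resolve_right (hp.2 hq.lt)).symm)

namespace ChainAtomOrdering

variable {α : Type*} [PartialOrder α] (S : ChainAtomOrdering α) {u w a b c : α} {r : List α}

lemma ne_of_lt (h : S.lt u r a b) : a ≠ b :=
  fun hab => S.irrefl u r a (hab ▸ h)

lemma exists_minimal [Finite α] (u : α) (r : List α) (Q : α → Prop) (h : ∃ a, u ⋖ a ∧ Q a) :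
    ∃ a, (u ⋖ a ∧ Q a) ∧ ∀ b, u ⋖ b → Q b → ¬ S.lt u r b a := by
  have : IsTrans α (S.lt u r) := ⟨S.trans u r⟩
  have : Std.Irrefl (S.lt u r) := ⟨S.irrefl u r⟩
  obtain ⟨a, ha, hmin⟩ :=
    (Finite.wellFounded_of_trans_of_irrefl (S.lt u r)).has_min {a | u ⋖ a ∧ Q a} h
  exact ⟨a, ha, fun b hb hQ => hmin b ⟨hb, hQ⟩⟩

lemma exists_isFirstAtom [Finite α] (r : List α) (h : ∃ a, u ⋖ a ∧ a ≤ w) :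
    ∃ a, S.IsFirstAtom u w r a := by
  obtain ⟨a, ⟨ha, haw⟩, hmin⟩ := S.exists_minimal u r (· ≤ w) h
  refine ⟨a, ha, haw, fun b hb hbw hba => ?_⟩
  exact (S.total u r a b ha hb hba.symm).resolve_right (hmin b hb hbw)

variable {S}

lemma IsFirstAtom.lt_of_lt (h : S.IsFirstAtom u w r a) (hb : u ⋖ b) (hbw : b ≤ w)
    (hbc : S.lt u r b c) : S.lt u r a c := by
  obtain rfl | hba := eq_or_ne b a
  · exact hbc
  · exact S.trans u r a b c (h.2.2 b hb hbw hba) hbc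

variable (S)

def ConditionII (u : α) (r : List α) : Prop :=
  ∀ ai aj y, u ⋖ ai → u ⋖ aj → S.lt u r ai aj → ai < y → aj < y →
    ∃ ak z, u ⋖ ak ∧ S.lt u r ak aj ∧ aj ⋖ z ∧ z ≤ y ∧ ak < z

def IsStablePartition (T : ChainAtomOrdering α) (u : α) (r : List α) (F : α → Prop) : Prop :=
  ∀ a b, u ⋖ a → u ⋖ b → (T.lt u r a b ↔ (F a ∧ ¬ F b) ∨ ((F a ↔ F b) ∧ S.lt u r a b))

def IsFirstAtomClosed (u : α) (r : List α) (F : α → Prop) : Prop :=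
  ∀ w a, (∃ s, u ⋖ s ∧ s ≤ w ∧ F s) → S.IsFirstAtom u w r a → F a

variable {S} {T : ChainAtomOrdering α} {F : α → Prop}

namespace IsStablePartition

variable (hT : S.IsStablePartition T u r F) (hF : S.IsFirstAtomClosed u r F)
include hT hF

lemma isFirstAtom_lt (h : S.IsFirstAtom u w r a) (hb : u ⋖ b) (hbw : b ≤ w) (hc : u ⋖ c)
    (hcw : c ≤ w) (hbc : T.lt u r b c) : S.lt u r a c := by
  rcases (hT b c hb hc).mp hbc with ⟨hFb, hFc⟩ | ⟨-, hbc⟩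
  · have hac : c ≠ a := fun hca => hFc (hca ▸ hF w a ⟨b, hb, hbw, hFb⟩ h)
    exact h.2.2 c hc hcw hac
  · exact h.lt_of_lt hb hbw hbc

lemma lt_of_isFirstAtom (h : S.IsFirstAtom u w r a) (hb : u ⋖ b) (hbw : b ≤ w)
    (hab : S.lt u r a b) : T.lt u r a b := by
  refine (hT a b h.1 hb).mpr ?_
  by_cases hFa : F a
  · by_cases hFb : F b
    · exact Or.inr ⟨iff_of_true hFa hFb, hab⟩
    · exact Or.inl ⟨hFa, hFb⟩
  · have hFb : ¬ F b := fun hFb => hFa (hF w a ⟨b, hb, hbw, hFb⟩ h)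
    exact Or.inr ⟨iff_of_false hFa hFb, hab⟩

variable [BoundedOrder α] [Finite α]

lemma memF_iff (hua : u ⋖ a) (x : α) : MemF T u r a ⊤ x ↔ MemF S u r a ⊤ x := by
  constructor
  · rintro ⟨hax, -, q, hq, -, hqa, hqx⟩
    obtain ⟨a₁, h₁⟩ := S.exists_isFirstAtom r ⟨q, hq, hqx.le⟩
    have h₁a : S.lt u r a₁ a := hT.isFirstAtom_lt hF h₁ hq hqx.le hua hax.lt.le hqa
    exact ⟨hax, le_top, a₁, h₁.1, le_top, h₁a,
      h₁.1.lt_of_le_of_covBy_of_ne h₁.2.1 hua hax.lt.le (S.ne_of_lt h₁a)⟩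
  · rintro ⟨hax, -, q, hq, -, hqa, hqx⟩
    obtain ⟨a₁, h₁⟩ := S.exists_isFirstAtom r ⟨q, hq, hqx.le⟩
    have h₁a : S.lt u r a₁ a := h₁.lt_of_lt hq hqx.le hqa
    exact ⟨hax, le_top, a₁, h₁.1, le_top, hT.lt_of_isFirstAtom hF h₁ hua hax.lt.le h₁a,
      h₁.1.lt_of_le_of_covBy_of_ne h₁.2.1 hua hax.lt.le (S.ne_of_lt h₁a)⟩

end IsStablePartition

lemma IsStablePartition.conditionII [Finite α] (hT : S.IsStablePartition T u r F)
    (hF : S.IsFirstAtomClosed u r F) (hS : S.ConditionII u r) : T.ConditionII u r := by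
  intro ai aj y hai haj hij hiy hjy
  obtain ⟨a₁, h₁⟩ := S.exists_isFirstAtom r ⟨ai, hai, hiy.le⟩
  have h₁j : S.lt u r a₁ aj := hT.isFirstAtom_lt hF h₁ hai hiy.le haj hjy.le hij
  obtain ⟨ak, z, hak, hkj, hjz, hzy, hkz⟩ := hS a₁ aj y h₁.1 haj h₁j
    (h₁.1.lt_of_le_of_covBy_of_ne h₁.2.1 haj hjy.le (S.ne_of_lt h₁j)) hjy
  obtain ⟨b₁, hb₁⟩ := S.exists_isFirstAtom r ⟨aj, haj, hjz.lt.le⟩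
  have hb₁j : S.lt u r b₁ aj := hb₁.lt_of_lt hak hkz.le hkj
  exact ⟨b₁, z, hb₁.1, hT.lt_of_isFirstAtom hF hb₁ haj hjz.lt.le hb₁j, hjz, hzy,
    hb₁.1.lt_of_le_of_covBy_of_ne hb₁.2.1 haj hjz.lt.le (S.ne_of_lt hb₁j)⟩

end ChainAtomOrdering

namespace IsGRAO

variable {α : Type*} [PartialOrder α] {S : ChainAtomOrdering α} {u v a : α} {r : List α}

lemma of_covBy (h : IsGRAO S u v r) (hua : u ⋖ a) (hav : a ≤ v) : IsGRAO S a v (r ++ [a]) := by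
  cases h with
  | base _ _ _ huv =>
    obtain rfl : a = v := hav.eq_or_lt.resolve_right (huv.2 hua.lt)
    exact .step a a _ (fun b hb hba => absurd hb.lt hba.not_gt)
      (fun b _ _ hb hba => absurd hb.lt hba.not_gt) (fun b _ _ hb hba => absurd hb.lt hba.not_gt)
  | step _ _ _ ia _ _ => exact ia a hua hav

variable [BoundedOrder α]

lemma conditionII (h : IsGRAO S u ⊤ r) : S.ConditionII u r := by
  intro ai aj y hai haj hij hiy hjy
  cases h with
  | base _ _ _ hu => exact absurd (hiy.trans_le le_top) (hu.2 hai.lt)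
  | step _ _ _ _ _ ii =>
    obtain ⟨ak, z, hak, -, hkj, hjz, hzy, hkz⟩ := ii ai aj y hai le_top haj le_top hij hiy hjy le_top
    exact ⟨ak, z, hak, hkj, hjz, hzy, hkz⟩

lemma isFirstAtom_memF_or_forall_not_memF (h : IsGRAO S u ⊤ r) {x z : α} (hua : u ⋖ a)
    (hax : a ⋖ x) (hxz : x ⋖ z) :
    (∃ b, S.IsFirstAtom a z (r ++ [a]) b ∧ MemF S u r a ⊤ b) ∨
      ∀ b, a ⋖ b → b ≤ z → ¬ MemF S u r a ⊤ b := by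
  cases h with
  | base _ _ _ hu => exact absurd (hax.lt.trans (hxz.lt.trans_le le_top)) (hu.2 hua.lt)
  | step _ _ _ _ ib _ =>
    rcases ib a x z hua le_top hax hxz le_top with ⟨b, hb, a', h'⟩ | hnone
    · exact .inl ⟨b, hb, hb.1, le_top, a', h'⟩
    · exact .inr fun b hab hbz ⟨_, _, a', ha', ha'v, ha'a, ha'b⟩ =>
        hnone b a' hab hbz ha' ha'v ha'a ha'b

end IsGRAO

inductive Root {α : Type*} [PartialOrder α] [OrderBot α] : α → List α → Prop
  | bot : Root ⊥ [⊥]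
  | step {u r a} : Root u r → u ⋖ a → Root a (r ++ [a])

namespace Root

variable {α : Type*} [PartialOrder α] {u : α} {r : List α}

lemma satChain [OrderBot α] (h : Root u r) : SatChain (⊥ : α) u r := by
  induction h with
  | bot => exact ⟨List.isChain_singleton _, rfl, rfl⟩
  | @step u r a _ hua ih =>
    obtain ⟨hchain, hhead, hlast⟩ := ih
    refine ⟨List.isChain_append.mpr ⟨hchain, List.isChain_singleton _, ?_⟩, ?_,
      List.getLast?_concat⟩
    · intro x hx y hy
      rw [hlast, Option.mem_some_iff] at hx
      rw [List.head?_cons, Option.mem_some_iff] at hy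
      exact hx ▸ hy ▸ hua
    · cases r with
      | nil => simp at hhead
      | cons b l => simpa using hhead

lemma isGRAO [BoundedOrder α] {S : ChainAtomOrdering α} (hS : IsGRAO S ⊥ ⊤ [⊥]) (h : Root u r) :
    IsGRAO S u ⊤ r := by
  induction h with
  | bot => exact hS
  | step _ hua ih => exact ih.of_covBy hua le_top

end Root

section

variable {α : Type*} [PartialOrder α] [BoundedOrder α] [Finite α]

lemma isFirstAtomClosed_memF {S : ChainAtomOrdering α} {u a : α} {r : List α}
    (hu : IsGRAO S u ⊤ r) (ha : IsGRAO S a ⊤ (r ++ [a])) (hua : u ⋖ a) :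
    S.IsFirstAtomClosed a (r ++ [a]) (MemF S u r a ⊤) := by
  intro w a₁ hs h₁
  by_contra hF₁
  obtain ⟨s, ⟨has, hsw, hFs⟩, hmin⟩ :=
    S.exists_minimal a (r ++ [a]) (fun x => x ≤ w ∧ MemF S u r a ⊤ x) hs
  have hs₁ : s ≠ a₁ := fun h => hF₁ (h ▸ hFs)
  have h₁s : S.lt a (r ++ [a]) a₁ s := h₁.2.2 s has hsw hs₁
  obtain ⟨c, z, hc, hcs, hsz, hzw, hcz⟩ := ha.conditionII a₁ s w h₁.1 has h₁s
    (h₁.1.lt_of_le_of_covBy_of_ne h₁.2.1 has hsw hs₁.symm)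
    (has.lt_of_le_of_covBy_of_ne hsw h₁.1 h₁.2.1 hs₁)
  rcases hu.isFirstAtom_memF_or_forall_not_memF hua has hsz with ⟨b, hb, hFb⟩ | hnone
  · exact hmin b hb.1 ⟨hb.2.1.trans hzw, hFb⟩ (hb.lt_of_lt hc hcz.le hcs)
  · exact hnone s has hsz.lt.le hFs

lemma exists_isStablePartition {S T : ChainAtomOrdering α} (hS : IsGRAO S ⊥ ⊤ [⊥])
    (hT : IsReordering S T) {u : α} {r : List α} (h : Root u r) :
    ∃ F, S.IsStablePartition T u r F ∧ S.IsFirstAtomClosed u r F := by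
  induction h with
  | bot =>
    refine ⟨fun _ => False, fun a b ha hb => ?_, fun _ _ ⟨_, _, _, h⟩ _ => h⟩
    simp [hT.1 a b ha le_top hb le_top]
  | @step u r a hr hua ih =>
    obtain ⟨F, hTF, hF⟩ := ih
    have hu := hr.isGRAO hS
    refine ⟨MemF S u r a ⊤, fun x y hx hy => ?_,
      isFirstAtomClosed_memF hu (hu.of_covBy hua le_top) hua⟩
    rw [hT.2 r u a hr.satChain hua x y hx le_top hy le_top, hTF.memF_iff hF hua,
      hTF.memF_iff hF hua]

end

/-- Applying the atom reordering process (for any linear extension of the poset; the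
result is characterized by `IsReordering` independently of the chosen extension) to a
generalized recursive atom ordering of a finite bounded poset yields a recursive atom
ordering. -/
theorem stmt_1 {α : Type*} [PartialOrder α] [BoundedOrder α] [Fintype α]
    (Ga : ChainAtomOrdering α) (h : IsGRAO Ga ⊥ ⊤ [⊥])
    (Ga' : ChainAtomOrdering α) (hre : IsReordering Ga Ga') :
    IsRAO Ga' ⊥ ⊤ [⊥] := by
  suffices H : ∀ u r, Root u r → IsRAO Ga' u ⊤ r from H ⊥ [⊥] Root.bot
  intro u
  induction u using WellFoundedGT.induction with
  | _ u ih =>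
  intro r hr
  obtain ⟨F, hTF, hF⟩ := exists_isStablePartition h hre hr
  have hII := hTF.conditionII hF (hr.isGRAO h).conditionII
  refine .step u ⊤ r (fun a ha _ => ih a ha.lt _ (hr.step ha)) ?_ ?_
  · intro a b c ha _ hab _ hac _ hb hc
    refine (hre.2 r u a hr.satChain ha b c hab le_top hac le_top).mpr (.inl ⟨⟨hab, le_top, hb⟩, ?_⟩)
    rintro ⟨-, -, a', ha', ha'v, ha'a, ha'c⟩
    exact hc a' ha' ha'v ha'a ha'c
  · intro ai aj y hai _ haj _ hij hiy hjy _
    obtain ⟨ak, z, hak, hkj, hjz, hzy, hkz⟩ := hII ai aj y hai haj hij hiy hjy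
    exact ⟨ak, z, hak, le_top, hkj, hjz, hzy, hkz⟩
end

section
/- Let P be a finite bounded poset with a generalized recursive atom ordering Σ, and write a_1, …, a_t for the atoms of P in the Σ-order. Then for each j and each v ∈ P with a_j < v, either the Σ-first atom of [a_j,v]_{0̂⋖a_j} is greater than some atom a_i with i < j, or no atom of [a_j,v]_{0̂⋖a_j} is greater than any atom a_i with i < j. -/
/-!
Among the atoms of `[a,v]` lying above an atom earlier than `a`, take the one `c` that comes
first in the order on the atoms of `[a,⊤]`. If some atom `d` of `[a,v]` preceded `c`, condition
(ii) of the GRAO of `[a,⊤]` would give `c ⋖ z ≤ v` with `z` above an atom of `[a,⊤]` earlier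
than `c`. Condition (i)(b) for `a ⋖ c ⋖ z` then says that the first atom of `[a,z]` lies above
an atom earlier than `a` (since `c` does); that first atom is not `c`, so it precedes `c`,
contradicting the choice of `c`. Hence `c` is the first atom of `[a,v]`.
-/

namespace ChainAtomOrdering

variable {α : Type*} [PartialOrder α] (S : ChainAtomOrdering α)

def AboveEarlierAtom (u w : α) (r : List α) (a b : α) : Prop :=
  ∃ a', u ⋖ a' ∧ a' ≤ w ∧ S.lt u r a' a ∧ a' < b

theorem wellFounded_lt [Finite α] (u : α) (r : List α) : WellFounded (S.lt u r) := by
  have : IsTrans α (S.lt u r) := ⟨S.trans u r⟩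
  have : Std.Irrefl (S.lt u r) := ⟨S.irrefl u r⟩
  exact Finite.wellFounded_of_trans_of_irrefl _

variable {S}

theorem IsFirstAtom.not_lt {u v e b : α} {r : List α} (he : S.IsFirstAtom u v r e)
    (hb : u ⋖ b) (hbv : b ≤ v) : ¬ S.lt u r b e := by
  intro hbe
  have hb_ne : b ≠ e := fun h => S.irrefl u r b (h ▸ hbe)
  exact S.irrefl u r b (S.trans u r b e b hbe (he.2.2 b hb hbv hb_ne))

end ChainAtomOrdering

theorem CovBy.eq_of_covBy_of_le {α : Type*} [PartialOrder α] {a b c : α}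
    (hb : a ⋖ b) (hc : a ⋖ c) (hbc : b ≤ c) : b = c :=
  hbc.eq_or_lt.resolve_right (hc.2 hb.lt)

namespace IsGRAO

variable {α : Type*} [PartialOrder α] {S : ChainAtomOrdering α}

theorem exists_lt_aboveEarlierAtom_of_lt {u w v a c d : α} {r : List α}
    (h : IsGRAO S u w r) (ha : u ⋖ a) (haw : a ≤ w) (hvw : v ≤ w)
    (hac : a ⋖ c) (hcv : c ≤ v) (had : a ⋖ d) (hdv : d ≤ v) (hdc : d ≠ c)
    (hlt : S.lt a (r ++ [a]) d c) (hc : S.AboveEarlierAtom u w r a c) :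
    ∃ e, a ⋖ e ∧ e ≤ v ∧ S.AboveEarlierAtom u w r a e ∧ S.lt a (r ++ [a]) e c := by
  have hcv' : c < v :=
    hcv.lt_of_ne fun h => hdc (had.eq_of_covBy_of_le hac (hdv.trans_eq h.symm))
  have hdv' : d < v :=
    hdv.lt_of_ne fun h => hdc (hac.eq_of_covBy_of_le had (hcv.trans_eq h.symm)).symm
  obtain ⟨a₁, ha₁, ha₁w, ha₁a, ha₁c⟩ := hc
  cases h with
  | base _ _ _ huw => exact (huw.2 ha.lt (hac.lt.trans_le (hcv.trans hvw))).elim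
  | step _ _ _ ia ib _ =>
    cases ia a ha haw with
    | base _ _ _ haw' => exact (haw'.2 hac.lt (hcv'.trans_le hvw)).elim
    | step _ _ _ _ _ ii =>
      obtain ⟨ak, z, hak, -, hakc, hcz, hzv, hakz⟩ :=
        ii d c v had (hdv.trans hvw) hac (hcv.trans hvw) hlt hdv' hcv' hvw
      rcases ib a c z ha haw hac hcz (hzv.trans hvw) with ⟨e, he, hee⟩ | hnone
      · by_cases hec : e = c
        · subst hec
          exact (he.not_lt hak hakz.le hakc).elim
        · exact ⟨e, he.1, he.2.1.trans hzv, hee, he.2.2 c hac hcz.le (Ne.symm hec)⟩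
      · exact (hnone c a₁ hac hcz.le ha₁ ha₁w ha₁a ha₁c).elim

/-- Condition (i)(b) extends from the `w` with `a ⋖ x ⋖ w` to every `v`. -/
theorem firstAtom_aboveEarlierAtom_or_forall_not [Finite α] {u w v a : α} {r : List α}
    (h : IsGRAO S u w r) (ha : u ⋖ a) (haw : a ≤ w) (hvw : v ≤ w) :
    (∃ b, S.IsFirstAtom a v (r ++ [a]) b ∧ S.AboveEarlierAtom u w r a b) ∨
      ∀ b, a ⋖ b → b ≤ v → ¬ S.AboveEarlierAtom u w r a b := by
  by_cases hT : ∃ b, a ⋖ b ∧ b ≤ v ∧ S.AboveEarlierAtom u w r a b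
  · left
    obtain ⟨c, ⟨hac, hcv, hc⟩, hmin⟩ := (S.wellFounded_lt a (r ++ [a])).has_min _ hT
    refine ⟨c, ⟨hac, hcv, fun d had hdv hdc => ?_⟩, hc⟩
    refine (S.total a _ c d hac had hdc.symm).resolve_right fun hdc' => ?_
    obtain ⟨e, hae, hev, he, hec⟩ :=
      h.exists_lt_aboveEarlierAtom_of_lt ha haw hvw hac hcv had hdv hdc hdc' hc
    exact hmin e ⟨hae, hev, he⟩ hec
  · exact Or.inr fun b hab hbv hb => hT ⟨b, hab, hbv, hb⟩

end IsGRAO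

theorem stmt_4_general {α : Type*} [PartialOrder α] [BoundedOrder α] [Fintype α]
    (S : ChainAtomOrdering α) (h : IsGRAO S ⊥ ⊤ [⊥])
    (a v : α) (ha : (⊥ : α) ⋖ a) :
    (∃ b, S.IsFirstAtom a v [⊥, a] b ∧
      ∃ a', (⊥ : α) ⋖ a' ∧ S.lt ⊥ [⊥] a' a ∧ a' < b) ∨
    (∀ b a', a ⋖ b → b ≤ v → (⊥ : α) ⋖ a' → S.lt ⊥ [⊥] a' a → ¬ a' < b) := by
  rcases h.firstAtom_aboveEarlierAtom_or_forall_not ha le_top le_top (v := v) with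
    ⟨b, hb, a', ha', -, ha'a, ha'b⟩ | hnone
  · exact Or.inl ⟨b, hb, a', ha', ha'a, ha'b⟩
  · exact Or.inr fun b a' hab hbv ha' ha'a ha'b => hnone b hab hbv ⟨a', ha', le_top, ha'a, ha'b⟩

/-- For a GRAO `S` of a finite bounded poset: for each atom `a` of the poset and each
`v > a`, either the `S`-first atom of `[a,v]_{⊥⋖a}` is greater than some atom of the
poset earlier than `a`, or no atom of `[a,v]_{⊥⋖a}` is greater than any atom earlier
than `a`. -/
theorem stmt_4 {α : Type*} [PartialOrder α] [BoundedOrder α] [Fintype α]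
    (S : ChainAtomOrdering α) (h : IsGRAO S ⊥ ⊤ [⊥])
    (a v : α) (ha : (⊥ : α) ⋖ a) (hav : a < v) :
    (∃ b, S.IsFirstAtom a v [⊥, a] b ∧
      ∃ a', (⊥ : α) ⋖ a' ∧ S.lt ⊥ [⊥] a' a ∧ a' < b) ∨
    (∀ b a', a ⋖ b → b ≤ v → (⊥ : α) ⋖ a' → S.lt ⊥ [⊥] a' a → ¬ a' < b) :=
  stmt_4_general S h a v ha
end

section
/- Let Γ be a generalized recursive atom ordering of a finite bounded poset P, and let a_i, a_{i+1} be consecutive atoms (in the Γ-order) of a rooted interval [u,1̂]_r with the property that every rooted interval [u,w]_r containing both a_i and a_{i+1} has neither a_i nor a_{i+1} as its Γ-first atom. Then the chain-atom ordering Λ obtained from Γ by switching the order of a_i and a_{i+1} in the order on the atoms of [u,1̂]_r (leaving all other orders unchanged) is itself a generalized recursive atom ordering of P. -/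
/-!
A GRAO is determined by two kinds of data read off the atom orders: the first atom of every
rooted interval, and, for an atom `a` of `[u,v]_r` and `b > a`, whether some atom of
`[u,v]_r` earlier than `a` lies below `b` (condition (ii) and both alternatives of (i)(b) are
phrased in these terms). Swapping consecutive atoms `ai, aj` changes only the comparison of
`ai` with `aj`. First atoms survive because no interval containing both of them has either
one first. The earlier-atom relation survives because whenever `ai, aj < b`, the atom `ai` is
not first in `[u,b]_r`, so some atom preceding both of them lies below `b`.
-/

namespace ChainAtomOrdering

variable {α : Type*} [PartialOrder α]

def HasEarlierAtomBelow (S : ChainAtomOrdering α) (u v : α) (r : List α) (a b : α) : Prop :=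
  ∃ a', u ⋖ a' ∧ a' ≤ v ∧ S.lt u r a' a ∧ a' < b

theorem IsFirstAtom.of_lt_iff {S T : ChainAtomOrdering α} {u v a : α} {r : List α}
    (h : ∀ x y, T.lt u r x y ↔ S.lt u r x y) (ha : S.IsFirstAtom u v r a) :
    T.IsFirstAtom u v r a :=
  ⟨ha.1, ha.2.1, fun b hb hbv hba => (h a b).2 (ha.2.2 b hb hbv hba)⟩

theorem hasEarlierAtomBelow_congr {S T : ChainAtomOrdering α} {u v a b : α} {r : List α}
    (h : ∀ x y, T.lt u r x y ↔ S.lt u r x y) :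
    T.HasEarlierAtomBelow u v r a b ↔ S.HasEarlierAtomBelow u v r a b := by
  simp only [HasEarlierAtomBelow, h]

theorem exists_lt_of_not_isFirstAtom {S : ChainAtomOrdering α} {u w b : α} {r : List α}
    (hb : u ⋖ b) (hbw : b ≤ w) (hfirst : ¬ S.IsFirstAtom u w r b) :
    ∃ a, u ⋖ a ∧ a < w ∧ S.lt u r a b := by
  by_contra! hnone
  refine hfirst ⟨hb, hbw, fun c hc hcw hcb => ?_⟩
  refine (S.total u r b c hb hc hcb.symm).resolve_right fun hcb' => hnone c hc ?_ hcb'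
  refine hcw.lt_of_ne ?_
  rintro rfl
  exact hcb ((hc.eq_or_eq hb.le hbw).resolve_left hb.ne').symm

end ChainAtomOrdering

theorem IsGRAO.of_isFirstAtom_of_hasEarlierAtomBelow_iff {α : Type*} [PartialOrder α]
    {S T : ChainAtomOrdering α}
    (hfirst : ∀ u v r a, S.IsFirstAtom u v r a → T.IsFirstAtom u v r a)
    (hearlier : ∀ u v r a b, u ⋖ a → a < b → b ≤ v →
      (T.HasEarlierAtomBelow u v r a b ↔ S.HasEarlierAtomBelow u v r a b))
    {u v : α} {r : List α} (h : IsGRAO S u v r) : IsGRAO T u v r := by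
  induction h with
  | base u v r h => exact .base u v r h
  | step u v r _ ib ii ih =>
    refine .step u v r ih (fun a x w ha hav hax hxw hwv => ?_)
      (fun bi bj y hbi hbiv hbj hbjv hij hbiy hbjy hyv => ?_)
    · rcases ib a x w ha hav hax hxw hwv with ⟨b, hb, hbelow⟩ | hnone
      · exact .inl ⟨b, hfirst _ _ _ _ hb,
          (hearlier u v r a b ha hb.1.lt (hb.2.1.trans hwv)).2 hbelow⟩
      · refine .inr fun b a' hab hbw ha' ha'v ha'a ha'b => ?_
        obtain ⟨c, hc, hcv, hca, hcb⟩ := (hearlier u v r a b ha hab.lt (hbw.trans hwv)).1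
          ⟨a', ha', ha'v, ha'a, ha'b⟩
        exact hnone b c hab hbw hc hcv hca hcb
    · obtain ⟨ak, hak, hakv, hkj, hky⟩ :=
        (hearlier u v r bj y hbj hbjy hyv).1 ⟨bi, hbi, hbiv, hij, hbiy⟩
      obtain ⟨ak', z, hak', hak'v, hk'j, hz, hzy, hk'z⟩ :=
        ii ak bj y hak hakv hbj hbjv hkj hky hbjy hyv
      obtain ⟨c, hc, hcv, hcj, hcz⟩ :=
        (hearlier u v r bj z hbj hz.lt (hzy.trans hyv)).2 ⟨ak', hak', hak'v, hk'j, hk'z⟩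
      exact ⟨c, z, hc, hcv, hcj, hz, hzy, hcz⟩

namespace ChainAtomOrdering

variable {α : Type*} [PartialOrder α] [DecidableEq α] {Γ Λ : ChainAtomOrdering α} {u ai aj z : α} {r : List α}

theorem lt_swap_apply_left_iff (haj : u ⋖ aj) (hlt : Γ.lt u r ai aj)
    (hconsec : ∀ b, u ⋖ b → ¬ (Γ.lt u r ai b ∧ Γ.lt u r b aj)) (hz : u ⋖ z) (hzj : z ≠ aj)
    (x : α) : Γ.lt u r (Equiv.swap ai aj x) z ↔ Γ.lt u r x z := by
  have key : Γ.lt u r ai z ↔ Γ.lt u r aj z :=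
    ⟨fun h => (Γ.total u r aj z haj hz hzj.symm).resolve_right fun h' => hconsec z hz ⟨h, h'⟩,
      fun h => Γ.trans _ _ _ _ _ hlt h⟩
  rw [Equiv.swap_apply_def]
  split_ifs with hxi hxj
  · rw [hxi, key]
  · rw [hxj, key]
  · rfl

theorem lt_swap_apply_right_iff (hai : u ⋖ ai) (hlt : Γ.lt u r ai aj)
    (hconsec : ∀ b, u ⋖ b → ¬ (Γ.lt u r ai b ∧ Γ.lt u r b aj)) (hz : u ⋖ z) (hzi : z ≠ ai)
    (y : α) : Γ.lt u r z (Equiv.swap ai aj y) ↔ Γ.lt u r z y := by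
  have key : Γ.lt u r z ai ↔ Γ.lt u r z aj :=
    ⟨fun h => Γ.trans _ _ _ _ _ h hlt,
      fun h => (Γ.total u r z ai hz hai hzi).resolve_right fun h' => hconsec z hz ⟨h', h⟩⟩
  rw [Equiv.swap_apply_def]
  split_ifs with hyi hyj
  · rw [hyi, key]
  · rw [hyj, key]
  · rfl

theorem lt_iff_of_swap (hai : u ⋖ ai) (haj : u ⋖ aj) (hlt : Γ.lt u r ai aj)
    (hconsec : ∀ b, u ⋖ b → ¬ (Γ.lt u r ai b ∧ Γ.lt u r b aj))
    (hswap : ∀ x y, Λ.lt u r x y ↔ Γ.lt u r (Equiv.swap ai aj x) (Equiv.swap ai aj y))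
    {x y : α} (hx : u ⋖ x) (hy : u ⋖ y) (hxy : s(x, y) ≠ s(ai, aj)) :
    Λ.lt u r x y ↔ Γ.lt u r x y := by
  rw [hswap]
  rcases eq_or_ne x y with rfl | hne
  · simp only [Γ.irrefl]
  by_cases hy' : y ≠ ai ∧ y ≠ aj
  · rw [Equiv.swap_apply_of_ne_of_ne hy'.1 hy'.2]
    exact lt_swap_apply_left_iff haj hlt hconsec hy hy'.2 x
  · have hx' : x ≠ ai ∧ x ≠ aj := by
      refine ⟨fun hxi => hxy ?_, fun hxj => hxy ?_⟩
      · rw [hxi, (not_and_not_right.1 hy') (hxi ▸ hne.symm)]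
      · rw [hxj, by_contra fun hyi => hne (hxj.trans (not_and_not_right.1 hy' hyi).symm),
          Sym2.eq_swap]
    rw [Equiv.swap_apply_of_ne_of_ne hx'.1 hx'.2]
    exact lt_swap_apply_right_iff hai hlt hconsec hx hx'.1 y

theorem IsFirstAtom.of_swap (hai : u ⋖ ai) (haj : u ⋖ aj) (hlt : Γ.lt u r ai aj)
    (hconsec : ∀ b, u ⋖ b → ¬ (Γ.lt u r ai b ∧ Γ.lt u r b aj))
    (hnotfirst : ∀ w, ai ≤ w → aj ≤ w →
      ¬ Γ.IsFirstAtom u w r ai ∧ ¬ Γ.IsFirstAtom u w r aj)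
    (hswap : ∀ x y, Λ.lt u r x y ↔ Γ.lt u r (Equiv.swap ai aj x) (Equiv.swap ai aj y))
    {w b : α} (hb : Γ.IsFirstAtom u w r b) : Λ.IsFirstAtom u w r b := by
  obtain ⟨hub, hbw, hmin⟩ := hb
  refine ⟨hub, hbw, fun x hx hxw hxb =>
    (lt_iff_of_swap hai haj hlt hconsec hswap hub hx fun hpair => ?_).2 (hmin x hx hxw hxb)⟩
  rcases Sym2.eq_iff.1 hpair with ⟨rfl, rfl⟩ | ⟨rfl, rfl⟩
  · exact (hnotfirst w hbw hxw).1 ⟨hub, hbw, hmin⟩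
  · exact (hnotfirst w hxw hbw).2 ⟨hub, hbw, hmin⟩

theorem hasEarlierAtomBelow_iff_of_swap (hai : u ⋖ ai) (haj : u ⋖ aj) (hlt : Γ.lt u r ai aj)
    (hconsec : ∀ b, u ⋖ b → ¬ (Γ.lt u r ai b ∧ Γ.lt u r b aj))
    (hnotfirst : ∀ w, ai ≤ w → aj ≤ w →
      ¬ Γ.IsFirstAtom u w r ai ∧ ¬ Γ.IsFirstAtom u w r aj)
    (hswap : ∀ x y, Λ.lt u r x y ↔ Γ.lt u r (Equiv.swap ai aj x) (Equiv.swap ai aj y))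
    {v a b : α} (ha : u ⋖ a) (hab : a < b) (hbv : b ≤ v) :
    Λ.HasEarlierAtomBelow u v r a b ↔ Γ.HasEarlierAtomBelow u v r a b := by
  by_cases hpair : ∃ a', u ⋖ a' ∧ a' < b ∧ s(a', a) = s(ai, aj)
  · obtain ⟨a', -, ha'b, hpair⟩ := hpair
    have hab' : (ai < b ∧ aj < b) ∧ (a = ai ∨ a = aj) := by
      rcases Sym2.eq_iff.1 hpair with ⟨rfl, rfl⟩ | ⟨rfl, rfl⟩
      exacts [⟨⟨ha'b, hab⟩, .inr rfl⟩, ⟨⟨hab, ha'b⟩, .inl rfl⟩]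
    obtain ⟨c, hc, hcb, hci⟩ :=
      exists_lt_of_not_isFirstAtom hai hab'.1.1.le (hnotfirst b hab'.1.1.le hab'.1.2.le).1
    have hca : Γ.lt u r c a := by
      rcases hab'.2 with rfl | rfl
      exacts [hci, Γ.trans _ _ _ _ _ hci hlt]
    have hcpair : s(c, a) ≠ s(ai, aj) := fun h => by
      rcases Sym2.mem_iff.1 (h ▸ Sym2.mem_mk_left c a) with rfl | rfl
      exacts [Γ.irrefl _ _ _ hci, Γ.irrefl _ _ _ (Γ.trans _ _ _ _ _ hci hlt)]
    exact iff_of_true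
      ⟨c, hc, hcb.le.trans hbv, (lt_iff_of_swap hai haj hlt hconsec hswap hc ha hcpair).2 hca, hcb⟩
      ⟨c, hc, hcb.le.trans hbv, hca, hcb⟩
  · push Not at hpair
    refine exists_congr fun a' => ⟨?_, ?_⟩ <;> rintro ⟨ha', ha'v, ha'a, ha'b⟩ <;>
      refine ⟨ha', ha'v, ?_, ha'b⟩
    · exact (lt_iff_of_swap hai haj hlt hconsec hswap ha' ha (hpair a' ha' ha'b)).1 ha'a
    · exact (lt_iff_of_swap hai haj hlt hconsec hswap ha' ha (hpair a' ha' ha'b)).2 ha'a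

end ChainAtomOrdering

theorem stmt_6_general {α : Type*} [PartialOrder α] [BoundedOrder α] [DecidableEq α]
    (Ga La : ChainAtomOrdering α) (hGa : IsGRAO Ga ⊥ ⊤ [⊥])
    (u ai aj : α) (r : List α)
    (hai : u ⋖ ai) (haj : u ⋖ aj) (hlt : Ga.lt u r ai aj)
    (hconsec : ∀ b, u ⋖ b → ¬ (Ga.lt u r ai b ∧ Ga.lt u r b aj))
    (hnotfirst : ∀ w, ai ≤ w → aj ≤ w →
      ¬ Ga.IsFirstAtom u w r ai ∧ ¬ Ga.IsFirstAtom u w r aj)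
    (hswap : ∀ x y, La.lt u r x y ↔ Ga.lt u r (Equiv.swap ai aj x) (Equiv.swap ai aj y))
    (hother : ∀ u' r', u' ≠ u ∨ r' ≠ r → ∀ x y, La.lt u' r' x y ↔ Ga.lt u' r' x y) :
    IsGRAO La ⊥ ⊤ [⊥] := by
  refine hGa.of_isFirstAtom_of_hasEarlierAtomBelow_iff (fun u' v r' b hb => ?_)
    (fun u' v r' a b ha hab hbv => ?_)
  · by_cases hnode : u' = u ∧ r' = r
    · obtain ⟨rfl, rfl⟩ := hnode
      exact hb.of_swap hai haj hlt hconsec hnotfirst hswap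
    · exact hb.of_lt_iff (hother u' r' (not_and_or.1 hnode))
  · by_cases hnode : u' = u ∧ r' = r
    · obtain ⟨rfl, rfl⟩ := hnode
      exact ChainAtomOrdering.hasEarlierAtomBelow_iff_of_swap hai haj hlt hconsec hnotfirst hswap ha hab hbv
    · exact ChainAtomOrdering.hasEarlierAtomBelow_congr (hother u' r' (not_and_or.1 hnode))

/-- Swapping two consecutive atoms `ai, aj` of a rooted interval `[u,⊤]_r` in a GRAO
`Γ` of a finite bounded poset, where every rooted interval `[u,w]_r` containing both
`ai` and `aj` has neither as its `Γ`-first atom, yields a chain-atom ordering `Λ`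
that is again a GRAO. -/
theorem stmt_6 {α : Type*} [PartialOrder α] [BoundedOrder α] [Fintype α] [DecidableEq α]
    (Ga La : ChainAtomOrdering α) (hGa : IsGRAO Ga ⊥ ⊤ [⊥])
    (u ai aj : α) (r : List α) (hr : SatChain (⊥ : α) u r)
    (hai : u ⋖ ai) (haj : u ⋖ aj) (hlt : Ga.lt u r ai aj)
    (hconsec : ∀ b, u ⋖ b → ¬ (Ga.lt u r ai b ∧ Ga.lt u r b aj))
    (hnotfirst : ∀ w, ai ≤ w → aj ≤ w →
      ¬ Ga.IsFirstAtom u w r ai ∧ ¬ Ga.IsFirstAtom u w r aj)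
    (hswap : ∀ x y, La.lt u r x y ↔ Ga.lt u r (Equiv.swap ai aj x) (Equiv.swap ai aj y))
    (hother : ∀ u' r', u' ≠ u ∨ r' ≠ r → ∀ x y, La.lt u' r' x y ↔ Ga.lt u' r' x y) :
    IsGRAO La ⊥ ⊤ [⊥] :=
  stmt_6_general Ga La hGa u ai aj r hai haj hlt hconsec hnotfirst hswap hother
end

section
/- Let P be a finite bounded poset with a chain-atom ordering Λ, and let Γ be the chain-atom ordering of P obtained by applying the atom reordering process to Λ (with respect to a fixed linear extension of P). Then for every v ∈ P, the restriction of Γ to the interval [0̂,v] equals the chain-atom ordering of [0̂,v] obtained by applying the atom reordering process to the restriction of Λ to [0̂,v], computed with the induced linear extension (the restriction of the chosen linear extension of P to [0̂,v]). -/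
section SatChain

variable {α : Type*} [PartialOrder α] {x y z w : α} {t : List α}

theorem SatChain.ne_nil {l : List α} (h : SatChain x y l) : l ≠ [] := by
  rintro rfl
  simp [SatChain] at h

theorem SatChain.eq_of_append_singleton (h : SatChain x y (t ++ [z])) : y = z := by
  simpa using h.2.2.symm

theorem SatChain.eq_of_singleton (h : SatChain x y [z]) : x = z := by
  simpa using h.2.1.symm

theorem SatChain.dropLast (h : SatChain x y (t ++ [w] ++ [z])) :
    SatChain x w (t ++ [w]) ∧ w ⋖ z := by
  obtain ⟨hchain, hhead, -⟩ := h
  obtain ⟨hchain, -, hcov⟩ := List.isChain_append.mp hchain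
  refine ⟨⟨hchain, ?_, by simp⟩, hcov w (by simp) z rfl⟩
  cases t <;> simpa using hhead

end SatChain

theorem memF_iff_of_agree {α : Type*} [PartialOrder α] {S T : ChainAtomOrdering α}
    {uminus u v w c : α} {s : List α} (hvw : v ≤ w) (hc : u ⋖ c) (hcv : c ≤ v)
    (hST : ∀ u', uminus ⋖ u' → u' ≤ v → (S.lt uminus s u' u ↔ T.lt uminus s u' u)) :
    MemF S uminus s u w c ↔ MemF T uminus s u v c := by
  constructor
  · rintro ⟨-, -, u', hu', -, hlt, hu'c⟩
    have hu'v : u' ≤ v := hu'c.le.trans hcv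
    exact ⟨hc, hcv, u', hu', hu'v, (hST u' hu' hu'v).mp hlt, hu'c⟩
  · rintro ⟨-, -, u', hu', hu'v, hlt, hu'c⟩
    exact ⟨hc, hcv.trans hvw, u', hu', hu'v.trans hvw, (hST u' hu' hu'v).mpr hlt, hu'c⟩

/-- Induction on the root: at `u`, membership in `F_r(u,·)` only involves atom orders
strictly below `u`, where the two reorderings already agree. -/
theorem IsReorderingOn.lt_iff_of_le {α : Type*} [PartialOrder α] [OrderBot α]
    {La Ga Gav : ChainAtomOrdering α} {v w : α} (hvw : v ≤ w)
    (hGa : IsReorderingOn w La Ga) (hGav : IsReorderingOn v La Gav) :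
    ∀ r u a b, SatChain (⊥ : α) u r → u ⋖ a → a ≤ v → u ⋖ b → b ≤ v →
      (Ga.lt u r a b ↔ Gav.lt u r a b) := by
  intro r
  induction r using List.reverseRecOn with
  | nil => exact fun u a b hr => absurd rfl hr.ne_nil
  | append_singleton s z ih =>
    intro u a b hr ha hav hb hbv
    obtain rfl := hr.eq_of_append_singleton
    rcases s.eq_nil_or_concat' with rfl | ⟨t, p, rfl⟩
    · obtain rfl : ⊥ = u := hr.eq_of_singleton
      rw [List.nil_append, hGa.1 a b ha (hav.trans hvw) hb (hbv.trans hvw),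
        hGav.1 a b ha hav hb hbv]
    · obtain ⟨ht, hpu⟩ := hr.dropLast
      have huv : u ≤ v := ha.lt.le.trans hav
      have hF : ∀ c, u ⋖ c → c ≤ v →
          (MemF Ga p (t ++ [p]) u w c ↔ MemF Gav p (t ++ [p]) u v c) :=
        fun c hc hcv => memF_iff_of_agree hvw hc hcv
          fun x hx hxv => ih p x u ht hx hxv hpu huv
      rw [hGa.2 _ p u ht hpu a b ha (hav.trans hvw) hb (hbv.trans hvw),
        hGav.2 _ p u ht hpu a b ha hav hb hbv, hF a ha hav, hF b hb hbv]

theorem stmt_7_general {α : Type*} [PartialOrder α] [BoundedOrder α]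
    (La Ga : ChainAtomOrdering α) (hGa : IsReordering La Ga)
    (v : α) (Gav : ChainAtomOrdering α) (hGav : IsReorderingOn v La Gav) :
    ∀ u r a b, SatChain (⊥ : α) u r → u ⋖ a → a ≤ v → u ⋖ b → b ≤ v →
      (Ga.lt u r a b ↔ Gav.lt u r a b) :=
  fun u r => hGa.lt_iff_of_le le_top hGav r u

/-- The atom reordering process commutes with restriction to lower intervals: if `Γ`
is the reordering of `Λ` on all of the poset and `Γᵥ` is the reordering of the
restriction of `Λ` to `[⊥,v]` (with the induced linear extension; the results are
characterized by `IsReorderingOn` independently of the extensions), then `Γ` and `Γᵥ`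
agree on the atoms of every rooted interval contained in `[⊥,v]`. -/
theorem stmt_7 {α : Type*} [PartialOrder α] [BoundedOrder α] [Fintype α]
    (La Ga : ChainAtomOrdering α) (hGa : IsReordering La Ga)
    (v : α) (Gav : ChainAtomOrdering α) (hGav : IsReorderingOn v La Gav) :
    ∀ u r a b, SatChain (⊥ : α) u r → u ⋖ a → a ≤ v → u ⋖ b → b ≤ v →
      (Ga.lt u r a b ↔ Gav.lt u r a b) :=
  stmt_7_general La Ga hGa v Gav hGav
end

section
/- Every CC-labeling of a finite bounded poset P that has the unique earliest (UE) property is self-consistent. -/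
/-- The label sequence of a saturated chain, read from bottom to top.  Here
`lab r x y` is the label of the cover relation `x ⋖ y` with respect to the root `r`
(a saturated chain from `⊥` to `x` recorded as a list ending in `x`); this encodes a
chain-edge (CE-) labeling.  The first list argument is the root of the head of the
chain, the second is the chain itself. -/
def labelSeq {α Q : Type*} (lab : List α → α → α → Q) : List α → List α → List Q
  | _, [] => []
  | _, [_] => []
  | r, x :: y :: c => lab r x y :: labelSeq lab (r ++ [y]) (y :: c)

/-- `u ⋖ v ⋖ w` is a topological ascent with respect to the root `r`: the label
sequence of `u ⋖ v ⋖ w` is lexicographically strictly smaller than that of every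
other saturated chain from `u` to `w`. -/
def TopAscent {α Q : Type*} [PartialOrder α] [LinearOrder Q]
    (lab : List α → α → α → Q) (r : List α) (u v w : α) : Prop :=
  u ⋖ v ∧ v ⋖ w ∧ ∀ c, SatChain u w c → c ≠ [u, v, w] →
    List.Lex (· < ·) (labelSeq lab r [u, v, w]) (labelSeq lab r c)

/-- The saturated chain (second argument) is topologically ascending with respect to
the root given as first argument: every consecutive triple on it is a topological
ascent (with respect to the appropriately extended root). -/
def TopAscending {α Q : Type*} [PartialOrder α] [LinearOrder Q]
    (lab : List α → α → α → Q) : List α → List α → Prop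
  | r, u :: v :: w :: c => TopAscent lab r u v w ∧ TopAscending lab (r ++ [v]) (v :: w :: c)
  | _, _ => True

/-- `lab` is a CC-labeling: every rooted interval `[u,v]_r` has exactly one
topologically ascending saturated chain, distinct saturated chains of `[u,v]_r` have
distinct label sequences, and no label sequence is a prefix of another. -/
def IsCCLabeling {α Q : Type*} [PartialOrder α] [OrderBot α] [LinearOrder Q]
    (lab : List α → α → α → Q) : Prop :=
  ∀ u v r, SatChain (⊥ : α) u r → u ≤ v →
    (∃! c, SatChain u v c ∧ TopAscending lab r c) ∧
    (∀ c c', SatChain u v c → SatChain u v c' → c ≠ c' →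
      labelSeq lab r c ≠ labelSeq lab r c' ∧
      ¬ labelSeq lab r c <+: labelSeq lab r c')

/-- `lab` is a CL-labeling: every rooted interval `[u,v]_r` has exactly one saturated
chain with strictly increasing label sequence, and this label sequence is
lexicographically strictly smaller than that of every other saturated chain. -/
def IsCLLabeling {α Q : Type*} [PartialOrder α] [OrderBot α] [LinearOrder Q]
    (lab : List α → α → α → Q) : Prop :=
  ∀ u v r, SatChain (⊥ : α) u r → u ≤ v →
    ∃ c, SatChain u v c ∧ List.Chain' (· < ·) (labelSeq lab r c) ∧
      (∀ c', SatChain u v c' → List.Chain' (· < ·) (labelSeq lab r c') → c' = c) ∧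
      (∀ c', SatChain u v c' → c' ≠ c →
        List.Lex (· < ·) (labelSeq lab r c) (labelSeq lab r c'))

/-- `lab` is a topological CL-labeling: every rooted interval `[u,v]_r` has a unique
saturated chain with lexicographically smallest label sequence, and every other
saturated chain of `[u,v]_r` contains at least one topological descent (i.e. is not
topologically ascending). -/
def IsTopolCLLabeling {α Q : Type*} [PartialOrder α] [OrderBot α] [LinearOrder Q]
    (lab : List α → α → α → Q) : Prop :=
  ∀ u v r, SatChain (⊥ : α) u r → u ≤ v →
    ∃ c, SatChain u v c ∧
      (∀ c', SatChain u v c' → c' ≠ c →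
        List.Lex (· < ·) (labelSeq lab r c) (labelSeq lab r c')) ∧
      (∀ c', SatChain u v c' → c' ≠ c → ¬ TopAscending lab r c')

/-- `lab` has the unique earliest (UE) property: in each rooted interval `[u,v]_r`,
the smallest label on the cover relations upward from `u` occurs on only one such
cover relation. -/
def HasUE {α Q : Type*} [PartialOrder α] [OrderBot α] [LinearOrder Q]
    (lab : List α → α → α → Q) : Prop :=
  ∀ u v r, SatChain (⊥ : α) u r → u ≤ v →
    ∀ a b, u ⋖ a → a ≤ v → u ⋖ b → b ≤ v →
      (∀ a', u ⋖ a' → a' ≤ v → lab r u a ≤ lab r u a') →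
      (∀ a', u ⋖ a' → a' ≤ v → lab r u b ≤ lab r u a') → a = b

/-- `lab` is self-consistent: whenever `c₀` is the lexicographically strictly first
saturated chain of a rooted interval `[u,v]_r`, with `a` the atom on `c₀` and
`b ≠ a` another atom of `[u,v]_r`, then for every `v'` above both `a` and `b`, every
saturated chain of `[u,v']_r` through `b` is lexicographically later than every
saturated chain of `[u,v']_r` through `a`. -/
def SelfConsistent {α Q : Type*} [PartialOrder α] [OrderBot α] [LinearOrder Q]
    (lab : List α → α → α → Q) : Prop :=
  ∀ u v r, SatChain (⊥ : α) u r → ∀ c₀, SatChain u v c₀ →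
    (∀ c, SatChain u v c → c ≠ c₀ →
      List.Lex (· < ·) (labelSeq lab r c₀) (labelSeq lab r c)) →
    ∀ a, u ⋖ a → a ∈ c₀ →
    ∀ b, u ⋖ b → b ≤ v → b ≠ a →
    ∀ v', a ≤ v' → b ≤ v' →
    ∀ ca cb, SatChain u v' ca → a ∈ ca → SatChain u v' cb → b ∈ cb →
      List.Lex (· < ·) (labelSeq lab r ca) (labelSeq lab r cb)

/-!
If `c₀ = u ⋖ a ⋖ ⋯` is the strictly lexicographically first chain of `[u,v]_r`, then comparing it
with a chain through any other atom `a'` of `[u,v]_r` (such chains exist by finiteness) shows that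
`a` carries a minimal first label. By UE that minimum is attained at `a` only, so every other atom
`b` has a strictly larger label; hence, in any `[u,v']_r`, a chain through `b` already loses to a
chain through `a` at its first label.
-/

namespace SatChain

variable {α : Type*} [PartialOrder α] {x y : α} {l : List α}

lemma exists_eq_cons (h : SatChain x y l) : ∃ t, l = x :: t :=
  List.head?_eq_some_iff.1 h.2.1

lemma mem_le (h : SatChain x y l) {e : α} (he : e ∈ l) : e ≤ y := by
  refine h.1.backwards_induction (· ≤ y) l (fun _ _ hcov hle => hcov.le.trans hle) ?_ e he
  intro hne
  have hlast := h.2.2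
  rw [List.getLast?_eq_some_getLast hne, Option.some.injEq] at hlast
  exact hlast.le

lemma cons {z : α} (h : SatChain y z l) (hxy : x ⋖ y) : SatChain x z (x :: l) := by
  obtain ⟨t, rfl⟩ := h.exists_eq_cons
  exact ⟨List.isChain_cons_cons.2 ⟨hxy, h.1⟩, rfl, by simp [List.getLast?_cons, h.2.2]⟩

lemma eq_cons_cons_of_covBy {a : α} (h : SatChain x y l) (hxa : x ⋖ a) (ha : a ∈ l) :
    ∃ t, l = x :: a :: t := by
  obtain ⟨_ | ⟨w, t⟩, rfl⟩ := h.exists_eq_cons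
  · simp [hxa.ne'] at ha
  have hchain := List.isChain_cons_cons.1 h.1
  have hwa : w ≤ a := by
    refine hchain.2.induction (w ≤ ·) _ (fun _ _ hcov hle => hle.trans hcov.le)
      (fun _ => le_rfl) a ?_
    simpa [hxa.ne'] using ha
  obtain rfl | hwa := hwa.eq_or_lt
  · exact ⟨t, rfl⟩
  · exact (hxa.2 hchain.1.lt hwa).elim

end SatChain

lemma exists_satChain {α : Type*} [PartialOrder α] [IsStronglyAtomic α] [WellFoundedGT α]
    {x y : α} (hxy : x ≤ y) : ∃ l, SatChain x y l := by
  induction x using WellFoundedGT.induction with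
  | _ x ih =>
    obtain rfl | hlt := hxy.eq_or_lt
    · exact ⟨[x], List.isChain_singleton x, rfl, rfl⟩
    obtain ⟨z, hxz, hzy⟩ := exists_covBy_le_of_lt hlt
    obtain ⟨l, hl⟩ := ih z hxz.lt hzy
    exact ⟨x :: l, hl.cons hxz⟩

lemma List.Lex.head_le {Q : Type*} [LinearOrder Q] {x y : Q} {l m : List Q}
    (h : List.Lex (· < ·) (x :: l) (y :: m)) : x ≤ y := by
  cases h with
  | cons _ => exact le_rfl
  | rel h => exact h.le

section Labeling

variable {α Q : Type*} [PartialOrder α] [LinearOrder Q] {lab : List α → α → α → Q}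

lemma label_le_of_lex_first [IsStronglyAtomic α] [WellFoundedGT α] {r s : List α} {u a v : α}
    (hfirst : ∀ c, SatChain u v c → c ≠ u :: a :: s →
      List.Lex (· < ·) (labelSeq lab r (u :: a :: s)) (labelSeq lab r c))
    {b : α} (hub : u ⋖ b) (hbv : b ≤ v) : lab r u a ≤ lab r u b := by
  obtain rfl | hba := eq_or_ne b a
  · exact le_rfl
  obtain ⟨l, hl⟩ := exists_satChain hbv
  obtain ⟨t, rfl⟩ := hl.exists_eq_cons
  exact (hfirst (u :: b :: t) (hl.cons hub) (by simp [hba])).head_le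

lemma HasUE.label_lt [OrderBot α] (hue : HasUE lab) {r : List α} {u v a b : α}
    (hr : SatChain ⊥ u r) (hua : u ⋖ a) (hav : a ≤ v) (hub : u ⋖ b) (hbv : b ≤ v) (hba : b ≠ a)
    (hmin : ∀ a', u ⋖ a' → a' ≤ v → lab r u a ≤ lab r u a') : lab r u a < lab r u b :=
  (hmin b hub hbv).lt_of_ne fun h =>
    hba <| hue u v r hr (hua.le.trans hav) b a hub hbv hua hav
      (fun a' h₁ h₂ => h ▸ hmin a' h₁ h₂) hmin

end Labeling

theorem stmt_12_general {α Q : Type*} [PartialOrder α] [BoundedOrder α] [Fintype α]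
    [LinearOrder Q] (lab : List α → α → α → Q)
    (hue : HasUE lab) :
    SelfConsistent lab := by
  intro u v r hr c₀ hc₀ hfirst a hua ha b hub hbv hba v' _ _ ca cb hca haca hcb hbcb
  obtain ⟨s₀, rfl⟩ := hc₀.eq_cons_cons_of_covBy hua ha
  obtain ⟨sa, rfl⟩ := hca.eq_cons_cons_of_covBy hua haca
  obtain ⟨sb, rfl⟩ := hcb.eq_cons_cons_of_covBy hub hbcb
  exact List.Lex.rel <| hue.label_lt hr hua (hc₀.mem_le ha) hub hbv hba
    fun _ => label_le_of_lex_first hfirst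

/-- Every CC-labeling of a finite bounded poset with the unique earliest (UE)
property is self-consistent. -/
theorem stmt_12 {α Q : Type*} [PartialOrder α] [BoundedOrder α] [Fintype α]
    [LinearOrder Q] (lab : List α → α → α → Q)
    (hcc : IsCCLabeling lab) (hue : HasUE lab) :
    SelfConsistent lab :=
  stmt_12_general lab hue
end
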